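/- arXiv:2103.09443 — 2 statements merged into one kernel-verified Lean document; each statement's English description precedes it below -/
import Mathlib

section
/- Let ω be a word with b distinct letters such that |Π(ω)|/n^{b+1} → 1 as n → ∞. If x_1, x_2, …, x_m (m ≥ 1) are the letters occupying the positions strictly between two successive occurrences of a letter y in ω, then x_1, …, x_m cannot all be distinct; i.e., at least one letter appears more than once among them. -/
open MeasureTheory ProbabilityTheory Filter Finset
open scoped BigOperators ENNReal NNReal Topology Classical
open Fin.NatCast

noncomputable section

/-- The empirical spectral distribution of a matrix: `(1/n) ∑ δ_{λ_i}` where the `λ_i`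
are the eigenvalues (for a Hermitian, i.e. real symmetric, matrix); junk value `0`
for non-Hermitian matrices. -/
noncomputable def esdOfMatrix {n : ℕ} (A : Matrix (Fin n) (Fin n) ℝ) : Measure ℝ :=
  if h : A.IsHermitian then ((n : ℝ≥0∞))⁻¹ • ∑ i : Fin n, Measure.dirac (h.eigenvalues i)
  else 0

/-- Weak convergence of a sequence of measures on `ℝ`. -/
def WeakLim (μs : ℕ → Measure ℝ) (ν : Measure ℝ) : Prop :=
  ∀ f : BoundedContinuousFunction ℝ ℝ,
    Tendsto (fun n => ∫ t, f t ∂(μs n)) atTop (𝓝 (∫ t, f t ∂ν))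

/-- `P` is a partition of `{1, …, m}`. -/
def IsPartitionOf (m : ℕ) (P : Finset (Finset ℕ)) : Prop :=
  (∀ B ∈ P, B.Nonempty) ∧ (∀ B ∈ P, B ⊆ Finset.Icc 1 m) ∧
  (∀ B ∈ P, ∀ B' ∈ P, B ≠ B' → Disjoint B B') ∧
  (∀ i ∈ Finset.Icc 1 m, ∃ B ∈ P, i ∈ B)

/-- The block of the partition `P` containing `a` (junk value `∅` if there is none). -/
noncomputable def partOf (P : Finset (Finset ℕ)) (a : ℕ) : Finset ℕ :=
  (P.filter fun B => a ∈ B).sup id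

/-- `B` is a union of pairwise disjoint sets of consecutive integers, each of even size. -/
def IsEvenIntervalUnion (B : Finset ℕ) : Prop :=
  ∃ S : Finset (ℕ × ℕ),
    (∀ p ∈ S, p.1 ≤ p.2 ∧ Even (Finset.Icc p.1 p.2).card) ∧
    (∀ p ∈ S, ∀ q ∈ S, p ≠ q → Disjoint (Finset.Icc p.1 p.2) (Finset.Icc q.1 q.2)) ∧
    B = S.sup fun p => Finset.Icc p.1 p.2

/-- A partition of `{1, …, m}` is special symmetric if (i) its last block (the block whose
least element is the largest) is a union of even-sized sets of consecutive integers, and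
(ii) between any two successive elements of any block, any other block has an even number
of elements, appearing an equal number of times in odd and in even positions. -/
def IsSpecialSymmetric (m : ℕ) (P : Finset (Finset ℕ)) : Prop :=
  IsPartitionOf m P ∧
  (∀ B ∈ P, (∀ B' ∈ P, B' ≠ B → ∃ a ∈ B', ∀ c ∈ B, a < c) → IsEvenIntervalUnion B) ∧
  (∀ B ∈ P, ∀ i ∈ B, ∀ j ∈ B, i < j → (∀ l ∈ B, ¬(i < l ∧ l < j)) →
    ∀ B' ∈ P, B' ≠ B →
      Even ((B'.filter fun l => i < l ∧ l < j).card) ∧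
      (B'.filter fun l => i < l ∧ l < j ∧ Odd l).card
        = (B'.filter fun l => i < l ∧ l < j ∧ Even l).card)

/-- The finite set of all partitions of `{1, …, m}`. -/
noncomputable def partitionFinset (m : ℕ) : Finset (Finset (Finset ℕ)) :=
  ((Finset.Icc 1 m).powerset.powerset).filter (IsPartitionOf m)

/-- The finite set `SS(m)` of special symmetric partitions of `{1, …, m}`. -/
noncomputable def SSFinset (m : ℕ) : Finset (Finset (Finset ℕ)) :=
  ((Finset.Icc 1 m).powerset.powerset).filter (IsSpecialSymmetric m)

/-- The finite set `SS_b(m)`: special symmetric partitions of `{1, …, m}` with `b` blocks. -/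
noncomputable def SSbFinset (m b : ℕ) : Finset (Finset (Finset ℕ)) :=
  (SSFinset m).filter fun P => P.card = b

/-- The positions in `{1, …, m}` of first occurrences of the letters of the word of `P`. -/
noncomputable def firstOccs (m : ℕ) (P : Finset (Finset ℕ)) : Finset ℕ :=
  (Finset.Icc 1 m).filter fun i => ∀ i' ∈ Finset.Icc 1 m, i' < i → partOf P i' ≠ partOf P i

/-- The position `i_j` of the first occurrence of the `j`-th distinct letter (`1`-indexed)
of the word of the partition `P`. -/
noncomputable def iPos (m : ℕ) (P : Finset (Finset ℕ)) (j : ℕ) : ℕ :=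
  ((firstOccs m P).sort (· ≤ ·)).getD (j - 1) 0

/-- The basic identifications of the vertices `{0, 1, …, m}` of a circuit forced by the
`(C2)` constraints between successive occurrences of the same letter of the word of `P`,
together with the circuit condition identifying the vertices `0` and `m`. -/
def C2Rel (m : ℕ) (P : Finset (Finset ℕ)) : ℕ → ℕ → Prop := fun u v =>
  (u = 0 ∧ v = m) ∨
  ∃ i ∈ Finset.Icc 1 m, ∃ j ∈ Finset.Icc 1 m, i < j ∧ partOf P i = partOf P j ∧
    (∀ l ∈ Finset.Icc 1 m, i < l → l < j → partOf P l ≠ partOf P i) ∧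
    ((u = i - 1 ∧ v = j) ∨ (u = i ∧ v = j - 1))

/-- The equivalence of the vertices `{0, 1, …, m}` generated by the `(C2)` identifications:
its classes are the vertex classes of (circuits of) the word of `P`. -/
def vertexEquiv (m : ℕ) (P : Finset (Finset ℕ)) : ℕ → ℕ → Prop :=
  Relation.EqvGen (C2Rel m P)

/-- The label in `{0, 1, …, b}` of the vertex class of a vertex `v`: the class of the
vertex `0` is labelled `0`, and the class of the generating vertex `i_j` of the `j`-th
distinct letter is labelled `j`. -/
noncomputable def labOf (m : ℕ) (P : Finset (Finset ℕ)) (v : ℕ) : ℕ :=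
  if vertexEquiv m P v 0 then 0
  else sInf {j : ℕ | 1 ≤ j ∧ vertexEquiv m P v (iPos m P j)}

/-- The contribution `∫_{[0,1]^{b+1}} ∏_{j=1}^b g_{s_j}(x_{t_j}, x_{l_j}) dx` of a
special symmetric partition `P` of `{1, …, m}` with `b` blocks, where `s_j` is the size of
the `j`-th block of `P` and `(t_j, l_j)` (with `l_j = j`) are the labels of the vertex
classes of the two endpoints of the first occurrence of the `j`-th letter. -/
noncomputable def ssIntegral (g : ℕ → ℝ → ℝ → ℝ) (m b : ℕ) (P : Finset (Finset ℕ)) : ℝ :=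
  ∫ xv : Fin (b + 1) → ℝ in Set.univ.pi fun _ => Set.Icc (0 : ℝ) 1,
    ∏ j ∈ Finset.Icc 1 b,
      g ((partOf P (iPos m P j)).card)
        (xv ((labOf m P (iPos m P j - 1) : ℕ) : Fin (b + 1)))
        (xv ((j : ℕ) : Fin (b + 1)))

/-- A bounded Riemann integrable function on `[0,1]²`: bounded, and (by Lebesgue's
criterion) almost everywhere continuous on the square. -/
def BoundedRiemann (f : ℝ → ℝ → ℝ) : Prop :=
  (∃ C, ∀ a ∈ Set.Icc (0 : ℝ) 1, ∀ b ∈ Set.Icc (0 : ℝ) 1, |f a b| ≤ C) ∧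
  ∀ᵐ p ∂(volume.restrict (Set.Icc (0 : ℝ) 1 ×ˢ Set.Icc (0 : ℝ) 1)),
    ContinuousWithinAt (fun q : ℝ × ℝ => f q.1 q.2) (Set.Icc (0 : ℝ) 1 ×ˢ Set.Icc (0 : ℝ) 1) p

/-- The truncated entry `x_{ij,n} 1_{{|x_{ij,n}| ≤ t_n}}` (with `t_n ∈ [0,∞]`). -/
noncomputable def trunc {Ω : Type*} (x : ℕ → ℕ → ℕ → Ω → ℝ) (t : ℕ → ℝ≥0∞)
    (n i j : ℕ) (ω : Ω) : ℝ :=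
  if ENNReal.ofReal |x n i j ω| ≤ t n then x n i j ω else 0

/-- The `n × n` matrix with `(i,j)` entry `e i j ω` (`1`-indexed). -/
noncomputable def matOf {Ω : Type*} (e : ℕ → ℕ → ℕ → Ω → ℝ) (n : ℕ) (ω : Ω) :
    Matrix (Fin n) (Fin n) ℝ :=
  Matrix.of fun i j : Fin n => e n ((i : ℕ) + 1) ((j : ℕ) + 1) ω

/-- `M_s = ‖g_s‖_∞` on `[0,1]²` for even `s`, and `M_s = 0` for odd `s`. -/
noncomputable def Msup (g : ℕ → ℝ → ℝ → ℝ) (s : ℕ) : ℝ :=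
  if Even s then
    sSup {r : ℝ | ∃ a ∈ Set.Icc (0 : ℝ) 1, ∃ b ∈ Set.Icc (0 : ℝ) 1, r = |g s a b|}
  else 0

/-- `α_{2k} = ∑_{σ ∈ P(2k)} M_σ`, the multiplicative extension of `M` summed over all
partitions of `{1, …, 2k}`. -/
noncomputable def alphaSeq (g : ℕ → ℝ → ℝ → ℝ) (k : ℕ) : ℝ :=
  ∑ P ∈ partitionFinset (2 * k), ∏ B ∈ P, Msup g B.card

/-- Carleman's condition `∑_k β_{2k}^{-1/(2k)} = ∞` for a (moment) sequence `β`. -/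
def CarlemanCond (β : ℕ → ℝ) : Prop :=
  Tendsto (fun N => ∑ k ∈ Finset.Icc 1 N, β (2 * k) ^ (-(1 : ℝ) / (2 * k))) atTop atTop

/-- Assumption A of Bose, Saha, Sen and Sen, "Random matrices with independent entries:
beyond non-crossing partitions". -/
structure AssumptionA {Ω : Type*} [MeasurableSpace Ω] (μpr : Measure Ω)
    (x : ℕ → ℕ → ℕ → Ω → ℝ) (t : ℕ → ℝ≥0∞) (gn : ℕ → ℕ → ℝ → ℝ → ℝ)
    (g : ℕ → ℝ → ℝ → ℝ) : Prop where
  meas : ∀ n i j, Measurable (x n i j)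
  symm : ∀ n i j ω, x n i j ω = x n j i ω
  indep : ∀ n, iIndepFun
    (fun p : {p : ℕ × ℕ // 1 ≤ p.1 ∧ p.1 ≤ p.2 ∧ p.2 ≤ n} => x n p.1.1 p.1.2) μpr
  bddRiemann : ∀ k n : ℕ, 1 ≤ k → BoundedRiemann (gn (2 * k) n)
  momEven : ∀ k n i j : ℕ, 1 ≤ k → 1 ≤ i → i ≤ j → j ≤ n →
    (n : ℝ) * ∫ ω, trunc x t n i j ω ^ (2 * k) ∂μpr = gn (2 * k) n (i / n) (j / n)
  momOdd : ∀ k : ℕ, 1 ≤ k → ∀ α : ℝ, α < 1 →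
    Tendsto (fun n : ℕ => (n : ℝ) ^ α *
      ⨆ p : {p : ℕ × ℕ // 1 ≤ p.1 ∧ p.1 ≤ p.2 ∧ p.2 ≤ n},
        |∫ ω, trunc x t n p.1.1 p.1.2 ω ^ (2 * k - 1) ∂μpr|) atTop (𝓝 0)
  unif : ∀ k : ℕ, 1 ≤ k → TendstoUniformlyOn (fun n p => gn (2 * k) n p.1 p.2)
    (fun p => g (2 * k) p.1 p.2) atTop (Set.Icc 0 1 ×ˢ Set.Icc 0 1)
  carleman : CarlemanCond (alphaSeq g)


/-- Convergence in probability of real random variables to a constant. -/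
def TendstoInProbability {Ω : Type*} [MeasurableSpace Ω] (μpr : Measure Ω)
    (Z : ℕ → Ω → ℝ) (c : ℝ) : Prop :=
  ∀ ε : ℝ, 0 < ε → Tendsto (fun n => μpr {ω | ε ≤ |Z n ω - c|}) atTop (𝓝 0)

/-- The semicircular distribution with variance `c`: density `(2πc)⁻¹ √(4c − x²)`
on `[−2√c, 2√c]`. -/
noncomputable def semicircularMeasure (c : ℝ) : Measure ℝ :=
  volume.withDensity fun s =>
    ENNReal.ofReal ((Set.Icc (-(2 * Real.sqrt c)) (2 * Real.sqrt c)).indicator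
      (fun u => (2 * Real.pi * c)⁻¹ * Real.sqrt (4 * c - u ^ 2)) s)

/-- The squared `L²`-Wasserstein distance between two probability measures on `ℝ`:
the infimum over all couplings of the expected squared difference. -/
noncomputable def d2sq (μ ν : Measure ℝ) : ℝ :=
  sInf {r : ℝ | ∃ ρ : Measure (ℝ × ℝ), IsProbabilityMeasure ρ ∧
    ρ.map Prod.fst = μ ∧ ρ.map Prod.snd = ν ∧
    Integrable (fun q : ℝ × ℝ => (q.1 - q.2) ^ 2) ρ ∧
    r = ∫ q : ℝ × ℝ, (q.1 - q.2) ^ 2 ∂ρ}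

/-- Extension of a vertex function `Fin (m+1) → Fin n` to all of `ℕ` (by reduction
mod `m+1`); positions `0, …, m` are the only ones which are used. -/
def extFin {m n : ℕ} (v : Fin (m + 1) → Fin n) (i : ℕ) : Fin n :=
  v ⟨i % (m + 1), Nat.mod_lt i (Nat.succ_pos m)⟩

/-- The class `Π(ω)` of circuits of length `m` with values in `{1, …, n}` (encoded as
`Fin n`) associated with the word (partition) `P` of `{1, …, m}`: circuits `π` with
`π(0) = π(m)` such that `ω[i] = ω[j] ⟺ {π(i−1), π(i)} = {π(j−1), π(j)}` as unordered
pairs. -/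
noncomputable def circuitsOf (m : ℕ) (P : Finset (Finset ℕ)) (n : ℕ) :
    Finset (Fin (m + 1) → Fin n) :=
  Finset.univ.filter fun v =>
    extFin v m = extFin v 0 ∧
    ∀ i ∈ Finset.Icc 1 m, ∀ j ∈ Finset.Icc 1 m,
      (partOf P i = partOf P j ↔
        ({extFin v (i - 1), extFin v i} : Finset (Fin n)) = {extFin v (j - 1), extFin v j})

/-- The (unordered) edge of the circuit `v` at position `i`. -/
noncomputable def edgeOf {k n : ℕ} (v : Fin (k + 1) → Fin n) (i : ℕ) : Finset (Fin n) :=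
  {extFin v (i - 1), extFin v i}

/-- Quadruples of circuits of length `k` with values in `{1, …, n}` that are jointly
matched and cross matched, with exactly `b` distinct edges in total. -/
noncomputable def quadCircuits (k n b : ℕ) : Finset (Fin 4 → Fin (k + 1) → Fin n) :=
  Finset.univ.filter fun q =>
    (∀ c : Fin 4, extFin (q c) k = extFin (q c) 0) ∧
    (∀ c : Fin 4, ∀ i ∈ Finset.Icc 1 k,
      2 ≤ ∑ c' : Fin 4,
        ((Finset.Icc 1 k).filter fun i' => edgeOf (q c') i' = edgeOf (q c) i).card) ∧
    (∀ c : Fin 4, ∃ i ∈ Finset.Icc 1 k, ∃ c' : Fin 4, c' ≠ c ∧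
      ∃ i' ∈ Finset.Icc 1 k, edgeOf (q c') i' = edgeOf (q c) i) ∧
    ((Finset.univ : Finset (Fin 4)).biUnion
      (fun c => (Finset.Icc 1 k).image fun i => edgeOf (q c) i)).card = b

/-- `P` is a pair-partition: every block has exactly two elements. -/
def IsPairPartition (P : Finset (Finset ℕ)) : Prop := ∀ B ∈ P, B.card = 2

/-- `P` has a crossing: there are `a < b < c < d` with `a, c` in one block and `b, d`
in a different block. -/
def HasCrossing (P : Finset (Finset ℕ)) : Prop :=
  ∃ a b c d : ℕ, a < b ∧ b < c ∧ c < d ∧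
    ∃ B ∈ P, ∃ B' ∈ P, B ≠ B' ∧ a ∈ B ∧ c ∈ B ∧ b ∈ B' ∧ d ∈ B'

/-- `a` is an ancestor of `v` (or equal to it) for the parent function `p`. -/
def ancRel (p : ℕ → ℕ) (a v : ℕ) : Prop := ∃ s : ℕ, p^[s] v = a

/-- `(p, c)` encodes a colored rooted plane tree with vertices `0, 1, …, k` (the root
being `0`) and colors `0, 1, …, b` (the root having color `0`): `p` is the parent
function and `c` the coloring.  The vertices are labelled in depth-first order, left to
right (which encodes the plane structure); every color is used; two vertices of the same
color have parents of the same color, and are at the same distance from the root. -/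
def IsColoredTree (k b : ℕ) (p c : ℕ → ℕ) : Prop :=
  p 0 = 0 ∧ (∀ v, k < v → p v = 0) ∧
  (∀ v, 1 ≤ v → v ≤ k → p v < v) ∧
  (∀ v, 2 ≤ v → v ≤ k → ancRel p (p v) (v - 1)) ∧
  c 0 = 0 ∧ (∀ v, k < v → c v = 0) ∧
  (∀ v, 1 ≤ v → v ≤ k → 1 ≤ c v ∧ c v ≤ b) ∧
  (∀ j, 1 ≤ j → j ≤ b → ∃ v, 1 ≤ v ∧ v ≤ k ∧ c v = j) ∧
  (∀ u v, 1 ≤ u → u ≤ k → 1 ≤ v → v ≤ k → c u = c v → c (p u) = c (p v)) ∧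
  (∀ u v, 1 ≤ u → u ≤ k → 1 ≤ v → v ≤ k → c u = c v →
    ∀ s : ℕ, (p^[s] u = 0 ↔ p^[s] v = 0))

/-- The number `|E(i,j)|` of edges of the colored tree `(p, c)` whose endpoints have
colors `i` and `j`. -/
noncomputable def edgeColorCount (k : ℕ) (p c : ℕ → ℕ) (i j : ℕ) : ℕ :=
  ((Finset.Icc 1 k).filter fun v => (c v = j ∧ c (p v) = i) ∨ (c v = i ∧ c (p v) = j)).card

/-- The generalized homomorphism density
`t(T′, {M_{2k,n}}) = ∫_{[0,1]^{b+1}} ∏_{(i,j) : E(i,j) ≠ ∅} g_{2|E(i,j)|}(x_i, x_j) dx`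
of the colored rooted tree `(p, c)` with `k+1` vertices and `b+1` colors. -/
noncomputable def homDensity (g : ℕ → ℝ → ℝ → ℝ) (k b : ℕ) (p c : ℕ → ℕ) : ℝ :=
  ∫ xv : Fin (b + 1) → ℝ in Set.univ.pi fun _ => Set.Icc (0 : ℝ) 1,
    ∏ i ∈ Finset.range (b + 1), ∏ j ∈ Finset.range (b + 1),
      if i < j ∧ 0 < edgeColorCount k p c i j then
        g (2 * edgeColorCount k p c i j) (xv ((i : ℕ) : Fin (b + 1))) (xv ((j : ℕ) : Fin (b + 1)))
      else 1

/-- `(1/n) ∑_{i,j} x_{ij,n}² 1_{{|x_{ij,n}| > t_n}}`, the contribution of the truncated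
tails. -/
noncomputable def truncTail {Ω : Type*} (x : ℕ → ℕ → ℕ → Ω → ℝ) (t : ℕ → ℝ≥0∞)
    (n : ℕ) (ω : Ω) : ℝ :=
  (1 / n : ℝ) * ∑ i ∈ Finset.Icc 1 n, ∑ j ∈ Finset.Icc 1 n,
    if t n < ENNReal.ofReal |x n i j ω| then x n i j ω ^ 2 else 0

/-- `{0, C_2, 0, C_4, 0, …}` is the cumulant sequence of a probability distribution `G`
whose moment sequence satisfies Carleman's condition (via the moment–cumulant formula
`β_m = ∑_{σ ∈ P(m)} κ_σ`). -/
def IsCumulantSeqWithCarleman (C : ℕ → ℝ) : Prop :=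
  ∃ (G : Measure ℝ) (β : ℕ → ℝ), IsProbabilityMeasure G ∧
    (∀ m : ℕ, 1 ≤ m → Integrable (fun s : ℝ => s ^ m) G ∧ ∫ s, s ^ m ∂G = β m) ∧
    (∀ m : ℕ, 1 ≤ m →
      β m = ∑ P ∈ partitionFinset m, ∏ B ∈ P, (if Even B.card then C B.card else 0)) ∧
    CarlemanCond β

end

/-!
Suppose the letters at the positions strictly between two successive occurrences `i < j`
of `y` are pairwise distinct. In a circuit `π ∈ Π(ω)` the edge `{π(k-1), π(k)}` is determined
by the letter at position `k`, so `π` uses at most `b` edges; the edges at positions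
`i+1, …, j` are pairwise distinct, and the edge at `j` is the edge at `i`, so `π` contains a
closed trail. Every vertex other than `π(0)` is first reached along an edge of its own, and
on a closed trail one edge is not of this kind, so `π` takes at most `b` values. Hence
`|Π(ω)| ≤ b^{M+1} n^b = o(n^{b+1})`.
-/

noncomputable section WalkEdges

variable {α : Type*} (w : ℕ → α)

def walkEdge [DecidableEq α] (k : ℕ) : Finset α := {w (k - 1), w k}

def firstHit (x : α) : ℕ := sInf {t | w t = x}

def firstVisits (M : ℕ) : Finset ℕ := (Icc 1 M).filter fun k => firstHit w (w k) = k

variable {w}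

lemma left_mem_walkEdge [DecidableEq α] (k : ℕ) : w (k - 1) ∈ walkEdge w k :=
  Finset.mem_insert_self _ _

lemma right_mem_walkEdge [DecidableEq α] (k : ℕ) : w k ∈ walkEdge w k :=
  Finset.mem_insert_of_mem (Finset.mem_singleton_self _)

lemma firstHit_apply_le (t : ℕ) : firstHit w (w t) ≤ t := Nat.sInf_le rfl

lemma apply_firstHit (t : ℕ) : w (firstHit w (w t)) = w t :=
  Nat.sInf_mem (s := {s | w s = w t}) ⟨t, rfl⟩

lemma firstHit_firstHit (t : ℕ) : firstHit w (w (firstHit w (w t))) = firstHit w (w t) := by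
  rw [apply_firstHit (w := w)]

variable [DecidableEq α]

lemma firstHit_le_of_mem_walkEdge {x : α} {k : ℕ} (hx : x ∈ walkEdge w k) :
    firstHit w x ≤ k := by
  rcases Finset.mem_insert.mp hx with rfl | hx
  · exact (firstHit_apply_le _).trans (Nat.sub_le k 1)
  · rw [Finset.mem_singleton.mp hx]; exact firstHit_apply_le k

lemma walkEdge_injOn_firstHit : Set.InjOn (walkEdge w) {k | firstHit w (w k) = k} := by
  have hle : ∀ {k k'}, firstHit w (w k') = k' → walkEdge w k = walkEdge w k' → k' ≤ k :=
    fun hk' h => hk' ▸ firstHit_le_of_mem_walkEdge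
      (h ▸ right_mem_walkEdge _)
  exact fun k hk k' hk' h => le_antisymm (hle hk h.symm) (hle hk' h)

lemma eq_firstHit_of_mem_walkEdge {k : ℕ} (hk : firstHit w (w k) = k) {z : α}
    (hz : z ∈ walkEdge w k) (hmax : ∀ x ∈ walkEdge w k, firstHit w x ≤ firstHit w z) :
    k = firstHit w z :=
  le_antisymm (hk ▸ hmax _ (right_mem_walkEdge k))
    (firstHit_le_of_mem_walkEdge hz)

lemma card_image_range_eq_card_firstVisits_add_one (M : ℕ) :
    ((range (M + 1)).image w).card = (firstVisits w M).card + 1 := by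
  have himage : (range (M + 1)).image w = insert (w 0) ((firstVisits w M).image w) := by
    ext x
    simp only [mem_image, mem_range, mem_insert, firstVisits, mem_filter, mem_Icc]
    constructor
    · rintro ⟨t, ht, rfl⟩
      rcases Nat.eq_zero_or_pos (firstHit w (w t)) with h0 | hpos
      · exact Or.inl (by rw [← apply_firstHit (w := w) t, h0])
      · exact Or.inr ⟨_, ⟨⟨hpos, (firstHit_apply_le t).trans (by omega)⟩,
          firstHit_firstHit t⟩, apply_firstHit t⟩
    · rintro (rfl | ⟨k, ⟨⟨-, hk⟩, -⟩, rfl⟩)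
      exacts [⟨0, by omega, rfl⟩, ⟨k, by omega, rfl⟩]
  have hnot : w 0 ∉ (firstVisits w M).image w := by
    simp only [mem_image, firstVisits, mem_filter, mem_Icc, not_exists, not_and]
    rintro k ⟨⟨hk1, -⟩, hk⟩ h
    have := firstHit_apply_le (w := w) 0
    rw [← h, hk] at this
    omega
  have hinj : Set.InjOn w (firstVisits w M) := fun k hk k' hk' h => by
    rw [← (mem_filter.mp hk).2, ← (mem_filter.mp hk').2, h]
  rw [himage, card_insert_of_notMem hnot, card_image_of_injOn hinj]

lemma walkEdge_ne_singleton_of_mem_firstVisits {M k : ℕ} (hk : k ∈ firstVisits w M) (x : α) :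
    walkEdge w k ≠ {x} := by
  obtain ⟨hkM, hfirst⟩ := mem_filter.mp hk
  intro h
  have hprev : w (k - 1) = w k := by
    have h₁ := left_mem_walkEdge (w := w) k
    have h₂ := right_mem_walkEdge (w := w) k
    rw [h, Finset.mem_singleton] at h₁ h₂
    rw [h₁, h₂]
  have := firstHit_apply_le (w := w) (k - 1)
  rw [hprev, hfirst] at this
  have := (mem_Icc.mp hkM).1
  omega

/-- At the vertex of a closed trail that the walk reaches last, both trail edges could only
be the edge along which that vertex is first reached; the two are distinct unless the trail is
a loop, and a loop is never a first-visit edge. -/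
lemma exists_walkEdge_notMem_image_firstVisits {M s L : ℕ} (hL : 1 ≤ L)
    (hclosed : w (s + L) = w s)
    (htrail : Set.InjOn (fun t => walkEdge w (s + t)) (Set.Icc 1 L)) :
    ∃ p ∈ Set.Icc 1 L, walkEdge w (s + p) ∉ (firstVisits w M).image (walkEdge w) := by
  obtain ⟨t₀, ht₀, hmax⟩ := exists_max_image (range L) (fun t => firstHit w (w (s + t)))
    ⟨0, mem_range.mpr hL⟩
  rw [mem_range] at ht₀
  set z := w (s + t₀) with hz
  have hvertex : ∀ t ≤ L, firstHit w (w (s + t)) ≤ firstHit w z := by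
    intro t ht
    rcases ht.lt_or_eq with ht | rfl
    · exact hmax t (mem_range.mpr ht)
    · rw [hclosed, ← add_zero s]; exact hmax 0 (mem_range.mpr hL)
  have hedge : ∀ p ∈ Set.Icc 1 L, ∀ x ∈ walkEdge w (s + p), firstHit w x ≤ firstHit w z := by
    rintro p ⟨hp1, hpL⟩ x hx
    rcases Finset.mem_insert.mp hx with rfl | hx
    · rw [show s + p - 1 = s + (p - 1) by omega]; exact hvertex _ (by omega)
    · rw [Finset.mem_singleton.mp hx]; exact hvertex _ hpL
  by_contra! hall
  have hfirst : ∀ p ∈ Set.Icc 1 L, z ∈ walkEdge w (s + p) →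
      walkEdge w (s + p) = walkEdge w (firstHit w z) ∧ firstHit w z ∈ firstVisits w M := by
    intro p hp hz
    obtain ⟨k, hk, hkp⟩ := mem_image.mp (hall p hp)
    rw [← hkp] at hz ⊢
    rw [← eq_firstHit_of_mem_walkEdge (mem_filter.mp hk).2 hz (hkp ▸ hedge p hp)]
    exact ⟨rfl, hk⟩
  set tIn := if t₀ = 0 then L else t₀
  have htIn : tIn ∈ Set.Icc 1 L := by
    simp only [tIn]; split_ifs <;> exact ⟨by omega, by omega⟩
  have htOut : t₀ + 1 ∈ Set.Icc 1 L := ⟨by omega, by omega⟩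
  have hzin : z ∈ walkEdge w (s + tIn) := by
    convert right_mem_walkEdge (w := w) (s + tIn) using 1
    simp only [tIn]; split_ifs with h
    · rw [hclosed, hz, h, add_zero]
    · rfl
  have hzout : z ∈ walkEdge w (s + (t₀ + 1)) := left_mem_walkEdge _
  obtain ⟨hin, hz₁⟩ := hfirst _ htIn hzin
  obtain ⟨hout, -⟩ := hfirst _ htOut hzout
  have htIn_eq : tIn = t₀ + 1 := htrail htIn htOut (hin.trans hout.symm)
  have ht₀ : t₀ = 0 ∧ L = 1 := by simp only [tIn] at htIn_eq; split_ifs at htIn_eq <;> omega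
  obtain ⟨rfl, rfl⟩ := ht₀
  refine walkEdge_ne_singleton_of_mem_firstVisits hz₁ z ?_
  rw [← hout, walkEdge, hz, zero_add, add_tsub_cancel_right, add_zero, hclosed,
    Finset.pair_eq_singleton]

lemma card_image_range_le_of_closed_trail {M s L : ℕ} (hL : 1 ≤ L) (hsL : s + L ≤ M)
    (hclosed : w (s + L) = w s)
    (htrail : Set.InjOn (fun t => walkEdge w (s + t)) (Set.Icc 1 L)) :
    ((range (M + 1)).image w).card ≤ ((Icc 1 M).image (walkEdge w)).card := by
  obtain ⟨p, ⟨hp1, hpL⟩, hp⟩ := exists_walkEdge_notMem_image_firstVisits (M := M) hL hclosed htrail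
  have hssub : (firstVisits w M).image (walkEdge w) ⊂ (Icc 1 M).image (walkEdge w) :=
    (ssubset_iff_of_subset (image_subset_image (filter_subset _ _))).mpr
      ⟨_, mem_image_of_mem _ (mem_Icc.mpr ⟨by omega, by omega⟩), hp⟩
  have hinj : Set.InjOn (walkEdge w) (firstVisits w M) := fun k hk k' hk' =>
    walkEdge_injOn_firstHit (mem_filter.mp hk).2 (mem_filter.mp hk').2
  have hcard := card_lt_card hssub
  rw [card_image_of_injOn hinj] at hcard
  rw [card_image_range_eq_card_firstVisits_add_one]
  omega

end WalkEdges

lemma exists_comp_eq_of_card_image_le {X Y : Type*} [Fintype X] [Nonempty X] [DecidableEq Y]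
    {b : ℕ} (v : X → Y) (hv : (univ.image v).card ≤ b) :
    ∃ f : X → Fin b, ∃ g : Fin b → Y, g ∘ f = v := by
  let e := (univ.image v).equivFin
  refine ⟨fun x => Fin.castLE hv (e ⟨v x, mem_image_of_mem v (mem_univ x)⟩),
    fun y => if h : (y : ℕ) < (univ.image v).card then e.symm ⟨y, h⟩ else v (Classical.arbitrary X),
    funext fun x => ?_⟩
  simp

lemma card_filter_card_image_le {X Y : Type*} [Fintype X] [DecidableEq X] [Nonempty X]
    [Fintype Y] [DecidableEq Y] (b : ℕ) :
    (univ.filter fun v : X → Y => (univ.image v).card ≤ b).card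
      ≤ b ^ Fintype.card X * Fintype.card Y ^ b :=
  calc _ ≤ (univ.image fun fg : (X → Fin b) × (Fin b → Y) => fg.2 ∘ fg.1).card := by
        refine card_le_card fun v hv => ?_
        obtain ⟨f, g, hfg⟩ := exists_comp_eq_of_card_image_le v (mem_filter.mp hv).2
        exact mem_image.mpr ⟨(f, g), mem_univ _, hfg⟩
    _ ≤ _ := card_image_le
    _ = _ := by simp [Fintype.card_prod]

lemma tendsto_div_pow_succ_of_le_mul_pow {f : ℕ → ℝ} {C : ℝ} {b : ℕ} (hf₀ : ∀ n, 0 ≤ f n)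
    (hf : ∀ n, f n ≤ C * (n : ℝ) ^ b) :
    Tendsto (fun n => f n / (n : ℝ) ^ (b + 1)) atTop (𝓝 0) := by
  refine squeeze_zero' (Eventually.of_forall fun n => div_nonneg (hf₀ n) (by positivity)) ?_
    (tendsto_const_div_atTop_nhds_zero_nat C)
  filter_upwards [eventually_gt_atTop 0] with n hn
  have hn : (0 : ℝ) < n := Nat.cast_pos.mpr hn
  rw [div_le_div_iff₀ (by positivity) hn, pow_succ, ← mul_assoc]
  exact mul_le_mul_of_nonneg_right (hf n) hn.le

section Partitions

variable {M : ℕ} {P : Finset (Finset ℕ)}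

lemma partOf_eq_of_mem (hP : IsPartitionOf M P) {k : ℕ} {B : Finset ℕ} (hB : B ∈ P)
    (hk : k ∈ B) : partOf P k = B := by
  have hfilter : P.filter (fun B' => k ∈ B') = {B} := by
    ext B'
    simp only [mem_filter, mem_singleton]
    refine ⟨fun ⟨hB', hk'⟩ => ?_, by rintro rfl; exact ⟨hB, hk⟩⟩
    by_contra hne
    exact Finset.disjoint_left.mp (hP.2.2.1 B' hB' B hB hne) hk' hk
  rw [partOf, hfilter, sup_singleton, id]

lemma mem_partOf_self (hP : IsPartitionOf M P) {k : ℕ} (hk : k ∈ Icc 1 M) :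
    k ∈ partOf P k := by
  obtain ⟨B, hB, hkB⟩ := hP.2.2.2 k hk
  rwa [partOf_eq_of_mem hP hB hkB]

lemma partOf_mem (hP : IsPartitionOf M P) {k : ℕ} (hk : k ∈ Icc 1 M) : partOf P k ∈ P := by
  obtain ⟨B, hB, hkB⟩ := hP.2.2.2 k hk
  rwa [partOf_eq_of_mem hP hB hkB]

lemma partOf_injOn_Ioc (hP : IsPartitionOf M P) {B : Finset ℕ} (hB : B ∈ P) {i j : ℕ}
    (hi : i ∈ B) (hj : j ∈ B) (hsucc : ∀ l ∈ B, ¬(i < l ∧ l < j))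
    (hdistinct : ∀ l l', i < l → l < l' → l' < j → partOf P l ≠ partOf P l') :
    Set.InjOn (partOf P) (Set.Ioc i j) := by
  have hi₁ := (mem_Icc.mp (hP.2.1 B hB hi)).1
  have hjM := (mem_Icc.mp (hP.2.1 B hB hj)).2
  have hlt : ∀ l ∈ Set.Ioc i j, ∀ l' ∈ Set.Ioc i j, l < l' → partOf P l ≠ partOf P l' := by
    rintro l ⟨hil, -⟩ l' ⟨-, hl'j⟩ hll' heq
    rcases hl'j.lt_or_eq with hl'j | rfl
    · exact hdistinct l l' hil hll' hl'j heq
    · rw [partOf_eq_of_mem hP hB hj] at heq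
      exact hsucc l (heq ▸ mem_partOf_self hP (mem_Icc.mpr ⟨by omega, by omega⟩)) ⟨hil, hll'⟩
  intro l hl l' hl' heq
  by_contra hne
  rcases Nat.lt_or_gt_of_ne hne with h | h
  exacts [hlt l hl l' hl' h heq, hlt l' hl' l hl h heq.symm]

lemma card_image_walkEdge_le {α : Type*} [DecidableEq α] (hP : IsPartitionOf M P)
    {w : ℕ → α}
    (hw : ∀ a ∈ Icc 1 M, ∀ c ∈ Icc 1 M, partOf P a = partOf P c → walkEdge w a = walkEdge w c) :
    ((Icc 1 M).image (walkEdge w)).card ≤ P.card := by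
  refine card_le_card_of_forall_subsingleton (fun e B => ∃ k ∈ B, walkEdge w k = e) ?_ ?_
  · simp only [mem_image]
    rintro _ ⟨k, hk, rfl⟩
    exact ⟨partOf P k, partOf_mem hP hk, k, mem_partOf_self hP hk, rfl⟩
  · rintro B hB _ ⟨-, k, hk, rfl⟩ _ ⟨-, k', hk', rfl⟩
    exact hw k (hP.2.1 B hB hk) k' (hP.2.1 B hB hk')
      (by rw [partOf_eq_of_mem hP hB hk, partOf_eq_of_mem hP hB hk'])

lemma card_image_le_of_mem_circuitsOf (hP : IsPartitionOf M P) {i j : ℕ} (hi : i ∈ Icc 1 M)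
    (hj : j ∈ Icc 1 M) (hm : i + 1 < j) (hij : partOf P i = partOf P j)
    (hinj : Set.InjOn (partOf P) (Set.Ioc i j)) {n : ℕ} {v : Fin (M + 1) → Fin n}
    (hv : v ∈ circuitsOf M P n) : (univ.image v).card ≤ P.card := by
  set w := extFin v
  have hiff : ∀ a ∈ Icc 1 M, ∀ c ∈ Icc 1 M,
      partOf P a = partOf P c ↔ walkEdge w a = walkEdge w c := by
    simp only [circuitsOf, mem_filter] at hv
    exact hv.2.2
  have hjM := (mem_Icc.mp hj).2
  have htrail : Set.InjOn (fun t => walkEdge w (i + t)) (Set.Icc 1 (j - i)) := by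
    rintro t ⟨ht₁, ht⟩ t' ⟨ht₁', ht'⟩ heq
    have hmem : ∀ t, 1 ≤ t → t ≤ j - i → i + t ∈ Icc 1 M := fun t h₁ h₂ =>
      mem_Icc.mpr ⟨by omega, by omega⟩
    have := hinj ⟨by omega, by omega⟩ ⟨by omega, by omega⟩
      ((hiff _ (hmem t ht₁ ht) _ (hmem t' ht₁' ht')).mpr heq)
    omega
  obtain ⟨L, hL₁, hL, hclosed⟩ : ∃ L, 1 ≤ L ∧ L ≤ j - i ∧ w (i + L) = w i := by
    have hedge : walkEdge w i = walkEdge w j := (hiff i hi j hj).mp hij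
    rw [walkEdge, walkEdge, ← coe_inj, coe_pair, coe_pair, Set.pair_eq_pair_iff] at hedge
    rcases hedge with ⟨-, hji⟩ | ⟨-, hji⟩
    · exact ⟨j - i, by omega, le_rfl, by rw [Nat.add_sub_cancel' (by omega), hji]⟩
    · exact ⟨j - 1 - i, by omega, by omega, by rw [show i + (j - 1 - i) = j - 1 by omega, hji]⟩
  calc (univ.image v).card ≤ ((range (M + 1)).image w).card := by
        refine card_le_card fun x hx => ?_
        obtain ⟨k, -, rfl⟩ := mem_image.mp hx
        exact mem_image.mpr ⟨k, mem_range.mpr k.isLt, by simp [w, extFin, Nat.mod_eq_of_lt k.isLt]⟩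
    _ ≤ ((Icc 1 M).image (walkEdge w)).card :=
        card_image_range_le_of_closed_trail hL₁ (by omega) hclosed
          (htrail.mono (Set.Icc_subset_Icc_right hL))
    _ ≤ P.card := card_image_walkEdge_le hP fun a ha c hc => (hiff a ha c hc).mp

end Partitions

theorem letters_between_successive_occurrences_not_all_distinct_general
    (M b : ℕ) (P : Finset (Finset ℕ)) (hP : IsPartitionOf M P) (hb : P.card = b)
    (hlim : Tendsto (fun n : ℕ => ((circuitsOf M P n).card : ℝ) / (n : ℝ) ^ (b + 1))
      atTop (𝓝 1))
    (B : Finset ℕ) (hB : B ∈ P) (i j : ℕ) (hi : i ∈ B) (hj : j ∈ B)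
    (hsucc : ∀ l ∈ B, ¬(i < l ∧ l < j)) (hm : i + 1 < j) :
    ∃ l l', i < l ∧ l < l' ∧ l' < j ∧ partOf P l = partOf P l' := by
  subst hb
  by_contra! hdistinct
  have hinj := partOf_injOn_Ioc hP hB hi hj hsucc hdistinct
  have hij : partOf P i = partOf P j := by
    rw [partOf_eq_of_mem hP hB hi, partOf_eq_of_mem hP hB hj]
  have hcard : ∀ n : ℕ,
      ((circuitsOf M P n).card : ℝ) ≤ (P.card ^ (M + 1) : ℕ) * (n : ℝ) ^ P.card := by
    intro n
    have hsub : circuitsOf M P n ⊆ univ.filter fun v => (univ.image v).card ≤ P.card :=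
      fun v hv => mem_filter.mpr ⟨mem_univ v, card_image_le_of_mem_circuitsOf hP
        (hP.2.1 B hB hi) (hP.2.1 B hB hj) hm hij hinj hv⟩
    have := (card_le_card hsub).trans (card_filter_card_image_le P.card)
    rw [Fintype.card_fin, Fintype.card_fin] at this
    exact_mod_cast this
  exact one_ne_zero (tendsto_nhds_unique hlim
    (tendsto_div_pow_succ_of_le_mul_pow (fun n => Nat.cast_nonneg _) hcard))

/-- **Lemma.** If the word `ω` (of length `M`, with `b` distinct letters) satisfies
`|Π(ω)|/n^{b+1} → 1` and the positions strictly between two successive occurrences of a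
letter `y` are nonempty, then the letters occupying them cannot all be distinct. -/
theorem letters_between_successive_occurrences_not_all_distinct
    (M b : ℕ) (P : Finset (Finset ℕ)) (hP : IsPartitionOf M P) (hb : P.card = b)
    (hlim : Tendsto (fun n : ℕ => ((circuitsOf M P n).card : ℝ) / (n : ℝ) ^ (b + 1))
      atTop (𝓝 1))
    (B : Finset ℕ) (hB : B ∈ P) (i j : ℕ) (hi : i ∈ B) (hj : j ∈ B) (hij : i < j)
    (hsucc : ∀ l ∈ B, ¬(i < l ∧ l < j)) (hm : i + 1 < j) :
    ∃ l l', i < l ∧ l < l' ∧ l' < j ∧ partOf P l = partOf P l' :=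
  letters_between_successive_occurrences_not_all_distinct_general M b P hP hb hlim B hB i j hi hj
    hsucc hm
end

section
/- Fix k ≥ 1 and 1 ≤ b ≤ 2k. Let Q_{k,4}^b denote the number of quadruples (π_1, π_2, π_3, π_4) of circuits of length k into {1,…,n} that are jointly matched and cross matched and have exactly b distinct edges across the four circuits. Then there exists a constant C (independent of n) such that Q_{k,4}^b ≤ C·n^{b+2} for all n. -/
open MeasureTheory ProbabilityTheory Filter Finset
open scoped BigOperators ENNReal NNReal Topology Classical

/-! The `b` distinct edges of a quadruple span a graph on its vertices, which has at most
`b + (number of components)` vertices. Each circuit is connected, and cross matching puts each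
circuit in the component of another one, so there are at most two components and at most
`b + 2` vertices. A quadruple is then a map `Fin 4 × Fin (k + 1) → Fin n` into a set of at most
`b + 2` values, which leaves at most `n.choose (b + 2) * (b + 2) ^ (4 * (k + 1))` choices. -/

open Relation

section EdgeReachability

variable {V : Type*}

def EdgeAdj (E : Finset (Finset V)) (a b : V) : Prop := ∃ e ∈ E, a ∈ e ∧ b ∈ e

instance (E : Finset (Finset V)) : Std.Symm (EdgeAdj E) where
  symm _ _ := fun ⟨e, he, ha, hb⟩ => ⟨e, he, hb, ha⟩

theorem equivalence_reflTransGen_edgeAdj (E : Finset (Finset V)) :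
    Equivalence (ReflTransGen (EdgeAdj E)) :=
  ⟨fun _ => .refl, fun h => symm_of _ h, .trans⟩

variable [DecidableEq V]

theorem reflTransGen_edgeAdj_of_walk {E : Finset (Finset V)} {f : ℕ → V} {k : ℕ}
    (hf : ∀ j ∈ Icc 1 k, {f (j - 1), f j} ∈ E) {i : ℕ} (hi : i ≤ k) :
    ReflTransGen (EdgeAdj E) (f 0) (f i) := by
  induction i with
  | zero => exact .refl
  | succ i ih =>
    exact (ih (by omega)).tail ⟨_, hf (i + 1) (mem_Icc.2 ⟨by omega, hi⟩), by simp, by simp⟩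

theorem exists_reflTransGen_edgeAdj_erase {E : Finset (Finset V)} {e R : Finset V} {r v : V}
    (hr : r ∈ R) (h : ReflTransGen (EdgeAdj E) r v) :
    ∃ r' ∈ R ∪ e, ReflTransGen (EdgeAdj (E.erase e)) r' v := by
  induction h with
  | refl => exact ⟨r, mem_union_left _ hr, .refl⟩
  | @tail u w _ huw ih =>
    obtain ⟨e', he', hu, hw⟩ := huw
    by_cases hee : e' = e
    · exact ⟨w, mem_union_right _ (hee ▸ hw), .refl⟩
    · obtain ⟨r', hr', hpath⟩ := ih
      exact ⟨r', hr', hpath.tail ⟨e', mem_erase.2 ⟨hee, he'⟩, hu, hw⟩⟩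

/-- Vertices `≤` edges `+` components, with `R` meeting every component. -/
theorem card_le_card_add_card_of_reflTransGen_edgeAdj (E : Finset (Finset V))
    (hE : ∀ e ∈ E, #e ≤ 2) {R W : Finset V}
    (hW : ∀ w ∈ W, ∃ r ∈ R, ReflTransGen (EdgeAdj E) r w) :
    #W ≤ #E + #R := by
  induction E using Finset.strongInduction generalizing R with
  | H E ih =>
  by_cases hmeet : ∃ e ∈ E, ∃ x ∈ e, x ∈ R
  · -- delete an edge `e` touching `R` and add its (at most one) new endpoint to `R`
    obtain ⟨e, he, x, hxe, hxR⟩ := hmeet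
    have hRe : #(R ∪ e) ≤ #R + 1 := by
      rw [← insert_erase hxe, union_insert, insert_eq_of_mem (mem_union_left _ hxR)]
      have := card_erase_of_mem hxe
      have := hE e he
      have := card_union_le R (e.erase x)
      omega
    have hrec := ih (E.erase e) (erase_ssubset he) (fun e' he' => hE e' (mem_of_mem_erase he'))
      fun w hw => (hW w hw).elim fun r ⟨hr, hpath⟩ => exists_reflTransGen_edgeAdj_erase hr hpath
    have := card_erase_add_one he
    omega
  · push Not at hmeet
    refine (card_le_card fun w hw => ?_).trans (Nat.le_add_left _ _)
    obtain ⟨r, hr, hpath⟩ := hW w hw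
    rcases hpath.cases_head with rfl | ⟨u, ⟨e, he, hre, _⟩, _⟩
    · exact hr
    · exact absurd hr (hmeet e he r hre)

end EdgeReachability

theorem exists_two_classes_of_fin_four {r : Fin 4 → Fin 4 → Prop} (hr : Equivalence r)
    (hpair : ∀ c, ∃ c' ≠ c, r c c') : ∃ a a', ∀ c, r a c ∨ r a' c := by
  by_cases h0 : ∀ c, r 0 c
  · exact ⟨0, 0, fun c => .inl (h0 c)⟩
  push Not at h0
  obtain ⟨a, ha⟩ := h0
  refine ⟨0, a, fun c => or_iff_not_imp_left.2 fun hc => ?_⟩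
  obtain ⟨d, hdc, hd⟩ := hpair c
  obtain ⟨d', hda, hd'⟩ := hpair a
  have hd0 : ¬ r 0 d := fun h => hc (hr.trans h (hr.symm hd))
  have hd'0 : ¬ r 0 d' := fun h => ha (hr.trans h (hr.symm hd'))
  by_cases hca : c = a
  · exact hca ▸ hr.refl c
  by_cases hda' : d = a
  · exact hr.symm (hda' ▸ hd)
  by_cases hd'c : d' = c
  · exact hd'c ▸ hd'
  -- `c`, `a`, `d`, `d'` avoid the class of `0`, hence take only three values, and
  -- `c ≠ a`, `d ∉ {c, a}`, `d' ∉ {c, a}` then force `d = d'`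
  have hdd' : d = d' := by
    have h0c : c ≠ 0 := fun h => hc (h ▸ hr.refl 0)
    have h0a : a ≠ 0 := fun h => ha (h ▸ hr.refl 0)
    have h0d : d ≠ 0 := fun h => hd0 (h ▸ hr.refl 0)
    have h0d' : d' ≠ 0 := fun h => hd'0 (h ▸ hr.refl 0)
    omega
  exact hr.trans (hdd' ▸ hd') (hr.symm hd)

theorem card_filter_card_image_le_s9 {ι α : Type*} [Fintype ι] [DecidableEq ι] [Fintype α]
    [DecidableEq α] {s : ℕ} (hs : s ≤ Fintype.card α) :
    #(univ.filter fun f : ι → α => #(univ.image f) ≤ s) ≤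
      (Fintype.card α).choose s * s ^ Fintype.card ι := by
  calc #(univ.filter fun f : ι → α => #(univ.image f) ≤ s)
      ≤ #((univ.powersetCard s).biUnion fun S => Fintype.piFinset fun _ : ι => S) := by
        refine card_le_card fun f hf => ?_
        obtain ⟨S, hfS, -, hS⟩ := exists_subsuperset_card_eq (subset_univ (univ.image f))
          (mem_filter.1 hf).2 (by simpa using hs)
        exact mem_biUnion.2 ⟨S, mem_powersetCard_univ.2 hS,
          Fintype.mem_piFinset.2 fun i => hfS (mem_image_of_mem f (mem_univ i))⟩
    _ ≤ ∑ S ∈ univ.powersetCard s, #(Fintype.piFinset fun _ : ι => S) := card_biUnion_le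
    _ = (Fintype.card α).choose s * s ^ Fintype.card ι := by
        rw [sum_congr rfl fun S hS => by
          rw [Fintype.card_piFinset, prod_const, mem_powersetCard_univ.1 hS, card_univ]]
        rw [sum_const, card_powersetCard, card_univ, smul_eq_mul]

theorem extFin_val {m n : ℕ} (v : Fin (m + 1) → Fin n) (i : Fin (m + 1)) :
    extFin v i = v i := by
  simp [extFin, Nat.mod_eq_of_lt i.isLt]

theorem card_image_uncurry_le_of_mem_quadCircuits {k n b : ℕ}
    {q : Fin 4 → Fin (k + 1) → Fin n} (hq : q ∈ quadCircuits k n b) : #(univ.image (Function.uncurry q)) ≤ b + 2 := by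
  simp only [quadCircuits, mem_filter, mem_univ, true_and] at hq
  obtain ⟨-, -, hcross, hb⟩ := hq
  set E := (univ : Finset (Fin 4)).biUnion fun c => (Icc 1 k).image (edgeOf (q c))
  have hedge : ∀ c, ∀ i ∈ Icc 1 k, edgeOf (q c) i ∈ E := fun c i hi =>
    mem_biUnion.2 ⟨c, mem_univ _, mem_image_of_mem _ hi⟩
  have hwalk : ∀ c, ∀ i ≤ k, ReflTransGen (EdgeAdj E) (extFin (q c) 0) (extFin (q c) i) :=
    fun c _ hi => reflTransGen_edgeAdj_of_walk (hedge c) hi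
  have hshare : ∀ c, ∃ c' ≠ c,
      ReflTransGen (EdgeAdj E) (extFin (q c) 0) (extFin (q c') 0) := by
    intro c
    obtain ⟨i, hi, c', hc', i', hi', heq⟩ := hcross c
    have hstep : EdgeAdj E (extFin (q c) i) (extFin (q c') i') :=
      ⟨edgeOf (q c) i, hedge c i hi, by simp [edgeOf], heq ▸ by simp [edgeOf]⟩
    exact ⟨c', hc', ((hwalk c i (mem_Icc.1 hi).2).tail hstep).trans
      (symm_of _ (hwalk c' i' (mem_Icc.1 hi').2))⟩
  obtain ⟨a, a', hcover⟩ := exists_two_classes_of_fin_four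
    ((equivalence_reflTransGen_edgeAdj E).comap fun c => extFin (q c) 0) hshare
  have hW : ∀ w ∈ univ.image (Function.uncurry q),
      ∃ r ∈ ({extFin (q a) 0, extFin (q a') 0} : Finset (Fin n)),
        ReflTransGen (EdgeAdj E) r w := by
    simp only [mem_image, mem_univ, true_and, Prod.exists, Function.uncurry_apply_pair]
    rintro w ⟨c, i, rfl⟩
    rw [← extFin_val (q c) i]
    rcases hcover c with h | h
    · exact ⟨_, mem_insert_self _ _, h.trans (hwalk c i (Nat.lt_succ_iff.1 i.isLt))⟩
    · exact ⟨_, mem_insert_of_mem (mem_singleton_self _),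
        h.trans (hwalk c i (Nat.lt_succ_iff.1 i.isLt))⟩
  have hE : ∀ e ∈ E, #e ≤ 2 := by
    simp only [E, mem_biUnion, mem_image]
    rintro e ⟨c, -, i, -, rfl⟩
    exact card_le_two
  have := card_le_card_add_card_of_reflTransGen_edgeAdj E hE hW
  have := card_le_two (a := extFin (q a) 0) (b := extFin (q a') 0)
  omega

theorem card_quadCircuits_le (k n b : ℕ) :
    #(quadCircuits k n b) ≤ n.choose (min (b + 2) n) * min (b + 2) n ^ (4 * (k + 1)) :=
  calc #(quadCircuits k n b)
      ≤ #(univ.filter fun f : Fin 4 × Fin (k + 1) → Fin n =>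
          #(univ.image f) ≤ min (b + 2) n) :=
        card_le_card_of_injOn Function.uncurry
          (fun q hq => by
            simpa using le_min (card_image_uncurry_le_of_mem_quadCircuits hq)
              ((card_le_univ _).trans_eq (Fintype.card_fin n)))
          Function.uncurry_injective.injOn
    _ ≤ _ := by
        have := card_filter_card_image_le_s9 (ι := Fin 4 × Fin (k + 1))
          ((min_le_right (b + 2) n).trans_eq (Fintype.card_fin n).symm)
        simpa only [Fintype.card_prod, Fintype.card_fin] using this

theorem quad_circuit_count_bound_general (k b : ℕ) :
    ∃ C : ℝ, ∀ n : ℕ, ((quadCircuits k n b).card : ℝ) ≤ C * (n : ℝ) ^ (b + 2) := by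
  refine ⟨((b + 2) ^ (4 * (k + 1)) : ℕ), fun n => ?_⟩
  have hbound : #(quadCircuits k n b) ≤ (b + 2) ^ (4 * (k + 1)) * n ^ (b + 2) := by
    refine (card_quadCircuits_le k n b).trans ?_
    rcases n.eq_zero_or_pos with rfl | hn
    · simp
    rw [mul_comm]
    exact Nat.mul_le_mul (Nat.pow_le_pow_left (min_le_left _ _) _)
      ((n.choose_le_pow _).trans (Nat.pow_le_pow_right hn (min_le_left _ _)))
  exact_mod_cast hbound

/-- **Lemma.** The number `Q_{k,4}^b` of quadruples of jointly matched and cross matched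
circuits of length `k` into `{1, …, n}` with exactly `b` distinct edges is at most
`C n^{b+2}` for a constant `C` independent of `n`. -/
theorem quad_circuit_count_bound (k b : ℕ) (hk : 1 ≤ k) (hb1 : 1 ≤ b) (hb2 : b ≤ 2 * k) :
    ∃ C : ℝ, ∀ n : ℕ, ((quadCircuits k n b).card : ℝ) ≤ C * (n : ℝ) ^ (b + 2) :=
  quad_circuit_count_bound_general k b
end
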